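/- Let D be a digraph, let (R_i)_{i∈I} be an infinite family of pairwise disjoint equivalent out-rays, and suppose there exist families of paths (P_{i,j})_{i<j∈I} and (Q_{i,j})_{i>j∈I} such that: P_{i,j} is an R_i–R_j path internally disjoint from all rays, the paths (P_{i,j})_{j>i} are pairwise disjoint for each fixed i; Q_{i,j} is an R_i–R_j path internally disjoint from all rays, the paths (Q_{i,k})_{i>k} are pairwise disjoint for each fixed k; and for all i, j < k the end vertex of P_{i,k} precedes the start vertex of Q_{k,j} on R_k. Then for any infinite subset I_4 ⊆ I with I \ I_4 infinite, there exists an out-ray Ŝ in D intersecting every ray (R_i)_{i∈I_4} infinitely often such that for every ordered pair (i, j) of distinct elements of I_4 there are infinitely many pairwise disjoint R_i–R_j paths lying on Ŝ and internally disjoint from ⋃_{i∈I_4} R_i. -/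

import Mathlib

variable {V : Type*}

/-- An out-ray: a one-way infinite directed path oriented away from its start. -/
def IsOutRay (D : Digraph V) (f : ℕ → V) : Prop :=
  Function.Injective f ∧ ∀ n, D.Adj (f n) (f (n + 1))

/-- An in-ray: a one-way infinite directed path oriented towards its start. -/
def IsInRay (D : Digraph V) (f : ℕ → V) : Prop :=
  Function.Injective f ∧ ∀ n, D.Adj (f (n + 1)) (f n)

/-- A finite directed path, given as a nonempty duplicate-free list of vertices. -/
def IsDipath (D : Digraph V) (p : List V) : Prop :=
  p ≠ [] ∧ p.Nodup ∧ p.Chain' D.Adj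

def StartsIn (p : List V) (A : Set V) : Prop := ∃ a ∈ A, p.head? = some a

def EndsIn (p : List V) (B : Set V) : Prop := ∃ b ∈ B, p.getLast? = some b

def ListsDisjoint (p q : List V) : Prop := ∀ v ∈ p, v ∉ q

/-- There are infinitely many pairwise disjoint directed A–B paths. -/
def ManyDisjointPaths (D : Digraph V) (A B : Set V) : Prop :=
  ∃ P : ℕ → List V,
    (∀ n, IsDipath D (P n) ∧ StartsIn (P n) A ∧ EndsIn (P n) B) ∧
    ∀ m n, m ≠ n → ListsDisjoint (P m) (P n)

/-- Two rays are equivalent: infinitely many disjoint paths in both directions. -/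
def EquivRays (D : Digraph V) (R₁ R₂ : ℕ → V) : Prop :=
  ManyDisjointPaths D (Set.range R₁) (Set.range R₂) ∧
  ManyDisjointPaths D (Set.range R₂) (Set.range R₁)

/-- The internal vertices of a path. -/
def Internals (p : List V) : List V := p.tail.dropLast

def InternallyAvoids (p : List V) (U : Set V) : Prop := ∀ v ∈ Internals p, v ∉ U

/-- Infinitely many pairwise disjoint `A`–`B` paths whose internal vertices avoid `U`. -/
def ManyDisjointPathsAvoiding (D : Digraph V) (A B U : Set V) : Prop :=
  ∃ P : ℕ → List V,
    (∀ n, IsDipath D (P n) ∧ StartsIn (P n) A ∧ EndsIn (P n) B ∧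
      InternallyAvoids (P n) U) ∧
    ∀ m n, m ≠ n → ListsDisjoint (P m) (P n)

/-- The union of the vertex sets of a family of rays. -/
def RaysUnion {I : Type*} (R : I → ℕ → V) : Set V := ⋃ i, Set.range (R i)

/-- A non-trivial finite segment of a ray `R`, from position `s` to position `t`. -/
def IsRaySegment (R : ℕ → V) (q : List V) : Prop :=
  ∃ s t : ℕ, s < t ∧ q = (List.range (t - s + 1)).map fun m => R (s + m)

/-- `L` is a staircase for the sequence of ray-indices `seq`: a concatenation
`P₀ Q₁ P₁ ⋯ Q_{n-1} P_{n-1}` where `P k` is an `R (seq k)`–`R (seq (k+1))` path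
internally disjoint from all rays and each `Q k` (for `k ≥ 1`) is a non-trivial
segment of `R (seq k)`. -/
def IsStaircase {I : Type*} (D : Digraph V) (R : I → ℕ → V) {n : ℕ}
    (seq : Fin (n + 1) → I) (L : List V) : Prop :=
  ∃ P Q : Fin n → List V,
    (∀ k : Fin n, IsDipath D (P k) ∧
      StartsIn (P k) (Set.range (R (seq k.castSucc))) ∧
      EndsIn (P k) (Set.range (R (seq k.succ))) ∧
      InternallyAvoids (P k) (RaysUnion R)) ∧
    (∀ k : Fin n, 1 ≤ k.val → IsRaySegment (R (seq k.castSucc)) (Q k)) ∧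
    (∀ k : Fin n, ∀ h : 1 ≤ k.val,
      (P ⟨k.val - 1, by omega⟩).getLast? = (Q k).head? ∧
      (Q k).getLast? = (P k).head?) ∧
    L = (List.ofFn fun k : Fin n =>
      if k.val = 0 then P k else (Q k).tail ++ (P k).tail).flatten ∧
    IsDipath D L

/-- `p` is a contiguous subpath of the ray `S`. -/
def IsSubpathOf (S : ℕ → V) (p : List V) : Prop :=
  ∃ s : ℕ, p = (List.range p.length).map fun m => S (s + m)

/-!
`S` is the union of an increasing sequence of finite paths. Fix indices `a 0, a 1, …`,
consecutive ones distinct, in which every ordered pair of distinct elements of `I₄` occurs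
infinitely often as consecutive entries. Having reached `R (a n)`, choose `k ∉ I₄` above `a n` and
`a (n + 1)` such that `P (a n) k`, `Q k (a (n + 1))` and `R k` avoid a given finite set (the path
built so far and initial parts of `R (a n)` and `R (a (n + 1))`): all but finitely many `k` qualify
because each of these three families is pairwise disjoint, and `I₄ᶜ` is infinite. Then follow
`R (a n)` to the start of `P (a n) k`, take `P (a n) k`, go forwards along `R k` (the ordering
hypothesis) until hitting `Q k (a (n + 1))`, and follow it to `R (a (n + 1))`. Since `k ∉ I₄`, this
link meets the rays of `I₄` only at its ends.
-/

lemma ListsDisjoint.symm {p q : List V} (h : ListsDisjoint p q) : ListsDisjoint q p :=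
  fun v hq hp => h v hp hq

lemma mem_internals_or {p : List V} {u : V} (hu : u ∈ p) :
    p.head? = some u ∨ p.getLast? = some u ∨ u ∈ Internals p := by
  rcases p with _ | ⟨x, t⟩
  · simp at hu
  rcases List.mem_cons.1 hu with rfl | hut
  · simp
  obtain ⟨t, c, rfl⟩ := List.eq_nil_or_concat' t |>.resolve_left (List.ne_nil_of_mem hut)
  rcases List.mem_append.1 hut with hut | hut
  · simp [Internals, hut]
  · rw [List.mem_singleton.1 hut, List.getLast?_cons, List.getLast?_append]
    simp

lemma InternallyAvoids.eq_head_or_eq_getLast {p : List V} {U : Set V}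
    (hp : InternallyAvoids p U) {u : V} (hu : u ∈ p) (huU : u ∈ U) :
    p.head? = some u ∨ p.getLast? = some u :=
  (mem_internals_or hu).imp_right (Or.resolve_right · fun hi => hp u hi huU)

lemma internallyAvoids_of_forall {p : List V} {U : Set V} (hp : p.Nodup)
    (h : ∀ u ∈ p, u ∈ U → p.head? = some u ∨ p.getLast? = some u) : InternallyAvoids p U := by
  intro u hu huU
  have hup : u ∈ p := List.mem_of_mem_tail ((List.dropLast_sublist _).mem hu)
  rcases p with _ | ⟨x, t⟩
  · simp at hup
  have hut : u ∈ t := (List.dropLast_sublist _).mem hu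
  rcases h u hup huU with hh | hl
  · obtain rfl : x = u := by simpa using hh
    exact (List.nodup_cons.1 hp).1 hut
  · have ht : t ≠ [] := List.ne_nil_of_mem hut
    rw [List.getLast?_cons, List.getLast?_eq_some_getLast ht] at hl
    obtain rfl : t.getLast ht = u := by simpa using hl
    have := (List.nodup_cons.1 hp).2
    rw [← List.dropLast_append_getLast ht, List.nodup_append] at this
    exact this.2.2 _ hu _ (List.mem_singleton_self _) rfl

lemma IsDipath.append {D : Digraph V} {L M : List V} (hL : IsDipath D L) (hM : IsDipath D M)
    (hadj : ∀ x ∈ L.getLast?, ∀ y ∈ M.head?, D.Adj x y) (hdisj : ListsDisjoint L M) :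
    IsDipath D (L ++ M) :=
  ⟨by simp [hL.1], List.nodup_append.2 ⟨hL.2.1, hM.2.1, fun u hu v hv huv => hdisj u hu (huv ▸ hv)⟩,
    List.isChain_append.2 ⟨hL.2.2, hM.2.2, hadj⟩⟩

lemma IsDipath.exists_splice {D : Digraph V} {A C : List V} (hA : IsDipath D A)
    (hC : IsDipath D C) (hAC : ∃ v ∈ A, v ∈ C) :
    ∃ W, IsDipath D W ∧ W.head? = A.head? ∧ W.getLast? = C.getLast? ∧
      ∀ u ∈ W, u ∈ A ∨ u ∈ C := by
  classical
  have hfind : (A.find? fun x => decide (x ∈ C)).isSome := List.find?_isSome.2 (by simpa using hAC)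
  obtain ⟨v, hv⟩ := Option.isSome_iff_exists.1 hfind
  obtain ⟨hvC, pre, post, rfl, hpre⟩ := List.find?_eq_some_iff_append.1 hv
  obtain ⟨C₁, C₂, rfl⟩ := List.append_of_mem (by simpa using hvC)
  refine ⟨pre ++ v :: C₂, ⟨by simp, ?_, ?_⟩, by cases pre <;> simp,
    by simp only [List.getLast?_append_cons], ?_⟩
  · refine List.nodup_append.2
      ⟨(List.nodup_append.1 hA.2.1).1, (List.nodup_append.1 hC.2.1).2.1, ?_⟩
    rintro u hu w hw rfl
    simpa [hw] using hpre u hu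
  · have h₁ : (pre ++ [v]).IsChain D.Adj := hA.2.2.prefix ⟨post, by simp⟩
    have h₂ : ([v] ++ C₂).IsChain D.Adj := hC.2.2.suffix ⟨C₁, by simp⟩
    show List.IsChain D.Adj (pre ++ v :: C₂)
    simpa using h₁.append_overlap h₂ (by simp)
  · exact fun u hu =>
      (List.mem_append.1 hu).imp (List.mem_append_left _) (List.mem_append_right _)

def raySegment (S : ℕ → V) (s n : ℕ) : List V :=
  (List.range n).map fun m => S (s + m)

section raySegment

variable {S : ℕ → V} {s n : ℕ}

@[simp] lemma length_raySegment : (raySegment S s n).length = n := by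
  simp [raySegment]

@[simp] lemma getElem_raySegment {m : ℕ} (hm : m < (raySegment S s n).length) :
    (raySegment S s n)[m] = S (s + m) := by
  simp [raySegment]

@[simp] lemma mem_raySegment {u : V} : u ∈ raySegment S s n ↔ ∃ m < n, S (s + m) = u := by
  simp [raySegment]

lemma head?_raySegment (hn : 0 < n) : (raySegment S s n).head? = some (S s) := by
  rw [List.head?_eq_getElem?, List.getElem?_eq_getElem (by simpa using hn)]
  simp

lemma getLast?_raySegment (hn : 0 < n) : (raySegment S s n).getLast? = some (S (s + (n - 1))) := by
  rw [List.getLast?_eq_getElem?, List.getElem?_eq_getElem (by simp; omega)]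
  simp

lemma raySegment_eq_of_getElem {p : List V} {o : ℕ}
    (h : ∀ m (hm : m < p.length), p[m] = S (o + m)) : raySegment S o p.length = p :=
  List.ext_getElem (by simp) fun m _ hm => by simp [h m hm]

lemma listsDisjoint_raySegment (hS : Function.Injective S) {o o' n' : ℕ} (h : o + n ≤ o') :
    ListsDisjoint (raySegment S o n) (raySegment S o' n') := by
  simp only [ListsDisjoint, mem_raySegment]
  rintro _ ⟨m, hm, rfl⟩ ⟨m', -, he⟩
  have := hS he
  omega

lemma IsOutRay.isDipath_raySegment {D : Digraph V} (hS : IsOutRay D S) (hn : 0 < n) :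
    IsDipath D (raySegment S s n) := by
  refine ⟨by simp [← List.length_pos_iff]; omega,
    List.Nodup.map (fun a b h => by have := hS.1 h; omega) List.nodup_range, ?_⟩
  show List.IsChain D.Adj _
  refine List.isChain_iff_getElem.2 fun m hm => ?_
  simpa [← add_assoc] using hS.2 (s + m)

end raySegment

def EndsOnRay (L : List V) (S : ℕ → V) (p : ℕ) : Prop :=
  L.getLast? = some (S p) ∧ ∀ m, S m ∈ L → m ≤ p

section EndsOnRay

variable {D : Digraph V} {S : ℕ → V} {L M : List V} {p : ℕ}

lemma EndsOnRay.append (hM : EndsOnRay M S p) (hL : ∀ m, S m ∈ L → m ≤ p) :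
    EndsOnRay (L ++ M) S p :=
  ⟨by simp [List.getLast?_append, hM.1], fun m hm => (List.mem_append.1 hm).elim (hL m) (hM.2 m)⟩

lemma endsOnRay_raySegment (hS : Function.Injective S) {s n : ℕ} (hn : 0 < n) :
    EndsOnRay (raySegment S s n) S (s + (n - 1)) := by
  refine ⟨getLast?_raySegment hn, fun m hm => ?_⟩
  obtain ⟨m', hm', he⟩ := mem_raySegment.1 hm
  have := hS he
  omega

lemma IsDipath.append_raySegment (hL : IsDipath D L) (hend : EndsOnRay L S p)
    (hS : IsOutRay D S) (n : ℕ) :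
    IsDipath D (L ++ raySegment S (p + 1) n) ∧
      EndsOnRay (L ++ raySegment S (p + 1) n) S (p + n) := by
  rcases Nat.eq_zero_or_pos n with rfl | hn
  · simpa [raySegment] using ⟨hL, hend⟩
  refine ⟨hL.append (hS.isDipath_raySegment hn) ?_ ?_, ?_⟩
  · simp only [hend.1, head?_raySegment hn, Option.mem_some_iff]
    rintro _ rfl _ rfl
    exact hS.2 p
  · rintro u hu hu'
    obtain ⟨m, -, rfl⟩ := mem_raySegment.1 hu'
    have := hend.2 _ hu
    omega
  · have h := endsOnRay_raySegment hS.1 (s := p + 1) hn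
    rw [show p + 1 + (n - 1) = p + n by omega] at h
    exact h.append fun m hm => (hend.2 m hm).trans (Nat.le_add_right p n)

lemma IsOutRay.exists_dipath_via (hS : IsOutRay D S) {A C : List V} (hA : IsDipath D A)
    (hC : IsDipath D C) {a b : ℕ} (hAend : EndsOnRay A S a) (hChead : C.head? = some (S b))
    (hab : a < b) :
    ∃ W, IsDipath D W ∧ W.head? = A.head? ∧ W.getLast? = C.getLast? ∧
      ∀ u ∈ W, u ∈ A ∨ u ∈ Set.range S ∨ u ∈ C := by
  obtain ⟨hA', hA'end⟩ := hA.append_raySegment hAend hS (b - a)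
  rw [show a + (b - a) = b by omega] at hA'end
  have hmeet : ∃ v ∈ A ++ raySegment S (a + 1) (b - a), v ∈ C :=
    ⟨S b, List.mem_of_getLast? hA'end.1, List.mem_of_head? hChead⟩
  obtain ⟨W, hW, hhead, hlast, hmem⟩ := hA'.exists_splice hC hmeet
  obtain ⟨x, t, rfl⟩ := List.exists_cons_of_ne_nil hA.1
  refine ⟨W, hW, by simpa using hhead, hlast, fun u hu => ?_⟩
  rcases hmem u hu with hu | hu
  · rcases List.mem_append.1 hu with hu | hu
    · exact Or.inl hu
    · obtain ⟨m, -, rfl⟩ := mem_raySegment.1 hu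
      exact Or.inr (Or.inl ⟨_, rfl⟩)
  · exact Or.inr (Or.inr hu)

end EndsOnRay

lemma exists_seq_of_forall_exists {α : Type*} {p : ℕ → α → Prop} {r : ℕ → α → α → Prop}
    {x₀ : α} (h₀ : p 0 x₀) (h : ∀ n x, p n x → ∃ y, p (n + 1) y ∧ r n x y) :
    ∃ f : ℕ → α, ∀ n, p n (f n) ∧ r n (f n) (f (n + 1)) := by
  choose! g hg using h
  let f : ℕ → α := fun n => Nat.rec x₀ g n
  have hf : ∀ n, p n (f n) := fun n => Nat.rec h₀ (fun n ih => (hg n _ ih).1) n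
  exact ⟨f, fun n => ⟨hf n, (hg n _ (hf n)).2⟩⟩

lemma exists_isOutRay_of_isPrefix {D : Digraph V} {L : ℕ → List V}
    (hL : ∀ n, IsDipath D (L n)) (hpre : ∀ n, L n <+: L (n + 1)) (hlen : ∀ n, n < (L n).length) :
    ∃ S, IsOutRay D S ∧ ∀ n m (hm : m < (L n).length), (L n)[m] = S m := by
  have hmono {m n : ℕ} (hmn : m ≤ n) : L m <+: L n := by
    induction n, hmn using Nat.le_induction with
    | base => exact List.prefix_refl _
    | succ n _ ih => exact ih.trans (hpre n)
  have hlen' (n : ℕ) : n < (L (n + 1)).length := (Nat.lt_succ_self n).trans (hlen (n + 1))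
  let S n := (L (n + 1))[n]'(hlen' n)
  have hS (n m : ℕ) (hm : m < (L n).length) : (L n)[m] = S m := by
    rcases le_total n (m + 1) with hnm | hmn
    · exact (hmono hnm).getElem hm
    · exact ((hmono hmn).getElem (hlen' m)).symm
  refine ⟨S, ⟨fun m n hmn => ?_, fun n => ?_⟩, hS⟩
  · have := hlen (m + n + 1)
    rw [← hS (m + n + 1) m (by omega), ← hS (m + n + 1) n (by omega)] at hmn
    exact ((hL _).2.1.getElem_inj_iff).1 hmn
  · have := hlen (n + 2)
    rw [← hS (n + 2) n (by omega), ← hS (n + 2) (n + 1) (by omega)]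
    exact List.isChain_iff_getElem.1 (hL (n + 2)).2.2 n (by omega)

lemma exists_isOutRay_of_append {D : Digraph V} {L X W : ℕ → List V}
    (hL : ∀ n, IsDipath D (L n)) (hW : ∀ n, W n ≠ []) (hLXW : ∀ n, L (n + 1) = L n ++ X n ++ W n) :
    ∃ (S : ℕ → V) (o : ℕ → ℕ), IsOutRay D S ∧ StrictMono o ∧
      (∀ n, raySegment S (o n) (W n).length = W n) ∧ ∀ n, o n + (W n).length ≤ o (n + 1) := by
  have hWlen (n : ℕ) : 0 < (W n).length := List.length_pos_iff.2 (hW n)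
  have hlen' (n : ℕ) : (L (n + 1)).length = (L n).length + (X n).length + (W n).length := by
    simp only [hLXW n, List.length_append]
  have hlen (n : ℕ) : n < (L n).length := by
    induction n with
    | zero => exact List.length_pos_iff.2 (hL 0).1
    | succ n ih => have := hWlen n; rw [hlen']; omega
  obtain ⟨S, hS, hSL⟩ :=
    exists_isOutRay_of_isPrefix hL (fun n => ⟨X n ++ W n, by simp [hLXW n]⟩) hlen
  let o n := (L n).length + (X n).length
  have hnext (n : ℕ) : o n + (W n).length ≤ o (n + 1) := by
    simp only [o, hlen']
    omega
  refine ⟨S, o, hS, strictMono_nat_of_lt_succ fun n => ?_, fun n => ?_, hnext⟩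
  · have := hnext n; have := hWlen n; omega
  refine raySegment_eq_of_getElem fun m hm => ?_
  rw [← hSL (n + 1) _ (by rw [hlen']; dsimp only [o]; omega)]
  simp only [hLXW n, o]
  rw [List.getElem_append_right (by simp)]
  simp

lemma finite_setOf_not_disjoint {ι α : Type*} {T : Set ι} {A : ι → Set α}
    (hA : T.PairwiseDisjoint A) {F : Set α} (hF : F.Finite) :
    {k ∈ T | ¬Disjoint (A k) F}.Finite := by
  refine (hF.biUnion fun v _ => Set.Subsingleton.finite (s := {k ∈ T | v ∈ A k}) ?_).subset ?_
  · rintro k ⟨hk, hv⟩ k' ⟨hk', hv'⟩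
    by_contra hne
    exact Set.disjoint_left.1 (hA hk hk' hne) hv hv'
  · rintro k ⟨hk, hnd⟩
    obtain ⟨v, hvA, hvF⟩ := Set.not_disjoint_iff.1 hnd
    exact Set.mem_biUnion hvF ⟨hk, hvA⟩

lemma mem_raysUnion {I : Type*} (R : I → ℕ → V) (t : I) (m : ℕ) : R t m ∈ RaysUnion R :=
  Set.mem_iUnion.2 ⟨t, m, rfl⟩

structure RayLadder (D : Digraph V) (R : ℕ → ℕ → V) (P Q : ℕ → ℕ → List V) : Prop where
  isOutRay : ∀ i, IsOutRay D (R i)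
  disjoint : ∀ i j, i ≠ j → ∀ n m, R i n ≠ R j m
  forward : ∀ i j, i < j → IsDipath D (P i j) ∧ StartsIn (P i j) (Set.range (R i)) ∧
    EndsIn (P i j) (Set.range (R j)) ∧ InternallyAvoids (P i j) (RaysUnion R)
  forward_disjoint : ∀ i j k, i < j → i < k → j ≠ k → ListsDisjoint (P i j) (P i k)
  backward : ∀ i j, j < i → IsDipath D (Q i j) ∧ StartsIn (Q i j) (Set.range (R i)) ∧
    EndsIn (Q i j) (Set.range (R j)) ∧ InternallyAvoids (Q i j) (RaysUnion R)
  backward_disjoint : ∀ i j k, k < i → k < j → i ≠ j → ListsDisjoint (Q i k) (Q j k)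
  order : ∀ i j k, i < k → j < k → ∃ a b : ℕ,
    (P i k).getLast? = some (R k a) ∧ (Q k j).head? = some (R k b) ∧ a < b

def IsLink (D : Digraph V) (R : ℕ → ℕ → V) (J : Set ℕ) (i j : ℕ) (W : List V) : Prop :=
  IsDipath D W ∧ StartsIn W (Set.range (R i)) ∧ EndsIn W (Set.range (R j)) ∧
    InternallyAvoids W (⋃ k ∈ J, Set.range (R k))

namespace RayLadder

variable {D : Digraph V} {R : ℕ → ℕ → V} {P Q : ℕ → ℕ → List V}

lemma exists_index_avoiding (h : RayLadder D R P Q) {J : Set ℕ} (hJc : Jᶜ.Infinite)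
    (i j : ℕ) {F : Set V} (hF : F.Finite) :
    ∃ k ∉ J, i < k ∧ j < k ∧ (∀ u ∈ P i k, u ∉ F) ∧ (∀ u ∈ Q k j, u ∉ F) ∧ ∀ m, R k m ∉ F := by
  set T := {k | k ∉ J ∧ max i j < k}
  have hT : T.Infinite :=
    (hJc.sdiff (Set.finite_Iic (max i j))).mono fun k hk => ⟨hk.1, by simpa using hk.2⟩
  have left_lt {k} (hk : k ∈ T) : i < k := (le_max_left i j).trans_lt hk.2
  have right_lt {k} (hk : k ∈ T) : j < k := (le_max_right i j).trans_lt hk.2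
  have hP : T.PairwiseDisjoint fun k => {u | u ∈ P i k} := fun k hk k' hk' hne =>
    Set.disjoint_left.2 (h.forward_disjoint i k k' (left_lt hk) (left_lt hk') hne)
  have hQ : T.PairwiseDisjoint fun k => {u | u ∈ Q k j} := fun k hk k' hk' hne =>
    Set.disjoint_left.2 (h.backward_disjoint k k' j (right_lt hk) (right_lt hk') hne)
  have hR : T.PairwiseDisjoint fun k => Set.range (R k) := fun k _ k' _ hne =>
    Set.disjoint_left.2 fun _ ⟨m, hm⟩ ⟨m', hm'⟩ => h.disjoint k k' hne m m' (hm.trans hm'.symm)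
  obtain ⟨k, ⟨⟨hkT, hkP⟩, hkQ⟩, hkR⟩ := (((hT.sdiff (finite_setOf_not_disjoint hP hF)).sdiff
    (finite_setOf_not_disjoint hQ hF)).sdiff (finite_setOf_not_disjoint hR hF)).nonempty
  have disj {A : Set V} (hA : k ∉ {k ∈ T | ¬Disjoint A F}) : Disjoint A F :=
    not_not.1 fun hnd => hA ⟨hkT, hnd⟩
  exact ⟨k, hkT.1, left_lt hkT, right_lt hkT, fun u hu => Set.disjoint_left.1 (disj hkP) hu,
    fun u hu => Set.disjoint_left.1 (disj hkQ) hu, fun m => Set.disjoint_left.1 (disj hkR) ⟨m, rfl⟩⟩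

lemma exists_dipath_through (h : RayLadder D R P Q) {i j k : ℕ} (hik : i < k) (hjk : j < k) :
    ∃ W q r, IsDipath D W ∧ W.head? = some (R i q) ∧ W.getLast? = some (R j r) ∧
      (∀ u ∈ W, u ∈ P i k ∨ u ∈ Set.range (R k) ∨ u ∈ Q k j) ∧
      ∀ u ∈ W, u ∈ RaysUnion R → u = R i q ∨ u = R j r ∨ u ∈ Set.range (R k) := by
  obtain ⟨a, b, hAlast, hChead, hab⟩ := h.order i j k hik hjk
  obtain ⟨hA, ⟨_, ⟨q, rfl⟩, hAhead⟩, -, hAint⟩ := h.forward i k hik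
  obtain ⟨hC, -, ⟨_, ⟨r, rfl⟩, hClast⟩, hCint⟩ := h.backward k j hjk
  have hArays : ∀ u ∈ P i k, u ∈ RaysUnion R → u = R i q ∨ u = R k a := fun u hu hu' =>
    (hAint.eq_head_or_eq_getLast hu hu').imp (fun he => by simpa [hAhead] using he.symm)
      (fun he => by simpa [hAlast] using he.symm)
  have hCrays : ∀ u ∈ Q k j, u ∈ RaysUnion R → u = R k b ∨ u = R j r := fun u hu hu' =>
    (hCint.eq_head_or_eq_getLast hu hu').imp (fun he => by simpa [hChead] using he.symm)
      (fun he => by simpa [hClast] using he.symm)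
  have hAend : EndsOnRay (P i k) (R k) a := by
    refine ⟨hAlast, fun m hm => ?_⟩
    rcases hArays _ hm (mem_raysUnion R k m) with he | he
    · exact absurd he (h.disjoint k i hik.ne' m q)
    · exact ((h.isOutRay k).1 he).le
  obtain ⟨W, hW, hhead, hlast, hmem⟩ := (h.isOutRay k).exists_dipath_via hA hC hAend hChead hab
  refine ⟨W, q, r, hW, hhead.trans hAhead, hlast.trans hClast, hmem, fun u hu hu' => ?_⟩
  rcases hmem u hu with hu | hu | hu
  · rcases hArays u hu hu' with rfl | rfl
    exacts [Or.inl rfl, Or.inr (Or.inr ⟨a, rfl⟩)]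
  · exact Or.inr (Or.inr hu)
  · rcases hCrays u hu hu' with rfl | rfl
    exacts [Or.inr (Or.inr ⟨b, rfl⟩), Or.inr (Or.inl rfl)]

lemma exists_link_avoiding (h : RayLadder D R P Q) {J : Set ℕ} (hJc : Jᶜ.Infinite) {i j : ℕ}
    (hij : i ≠ j) {F : Set V} (hF : F.Finite) :
    ∃ W q r, IsLink D R J i j W ∧ W.head? = some (R i q) ∧ W.getLast? = some (R j r) ∧
      (∀ u ∈ W, u ∉ F) ∧ (∀ m, R i m ∈ W → m = q) ∧ ∀ m, R j m ∈ W → m = r := by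
  obtain ⟨k, hkJ, hik, hjk, hPF, hQF, hRF⟩ := h.exists_index_avoiding hJc i j hF
  obtain ⟨W, q, r, hW, hhead, hlast, hWmem, hWrays⟩ := h.exists_dipath_through hik hjk
  have hWF : ∀ u ∈ W, u ∉ F := fun u hu => by
    rcases hWmem u hu with hu | ⟨m, rfl⟩ | hu
    exacts [hPF u hu, hRF m, hQF u hu]
  have hWi : ∀ m, R i m ∈ W → m = q := fun m hm => by
    rcases hWrays _ hm (mem_raysUnion R i m) with he | he | ⟨m', he⟩
    · exact (h.isOutRay i).1 he
    · exact absurd he (h.disjoint i j hij m r)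
    · exact absurd he (h.disjoint k i hik.ne' m' m)
  have hWj : ∀ m, R j m ∈ W → m = r := fun m hm => by
    rcases hWrays _ hm (mem_raysUnion R j m) with he | he | ⟨m', he⟩
    · exact absurd he (h.disjoint j i hij.symm m q)
    · exact (h.isOutRay j).1 he
    · exact absurd he (h.disjoint k j hjk.ne' m' m)
  refine ⟨W, q, r, ⟨hW, ⟨_, ⟨q, rfl⟩, hhead⟩, ⟨_, ⟨r, rfl⟩, hlast⟩, ?_⟩, hhead, hlast, hWF, hWi,
    hWj⟩
  refine internallyAvoids_of_forall hW.2.1 fun u hu huJ => ?_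
  obtain ⟨k', hk', m', rfl⟩ : ∃ k' ∈ J, ∃ m', R k' m' = u := by simpa using huJ
  rcases hWrays _ hu (mem_raysUnion R k' m') with he | he | ⟨m, he⟩
  · exact Or.inl (he ▸ hhead)
  · exact Or.inr (he ▸ hlast)
  · exact absurd he (h.disjoint k k' (fun hkk => hkJ (hkk ▸ hk')) m m')

lemma exists_extension (h : RayLadder D R P Q) {J : Set ℕ} (hJc : Jᶜ.Infinite) {i j : ℕ}
    (hij : i ≠ j) {L : List V} {p : ℕ} (hL : IsDipath D L) (hend : EndsOnRay L (R i) p) :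
    ∃ X W r, IsDipath D (L ++ X ++ W) ∧ EndsOnRay (L ++ X ++ W) (R j) r ∧
      IsLink D R J i j W := by
  obtain ⟨M, hM⟩ := (L.finite_toSet.preimage (h.isOutRay j).1.injOn).bddAbove
  -- Avoiding `F` puts the start of the link beyond `R i p` and its end beyond every vertex of
  -- `R j` on `L`.
  set F := {u | u ∈ L} ∪ R i '' Set.Iic p ∪ R j '' Set.Iic M
  have hF : F.Finite :=
    (L.finite_toSet.union ((Set.finite_Iic p).image _)).union ((Set.finite_Iic M).image _)
  obtain ⟨W, q, r, hW, hhead, hlast, hWF, hWi, hWj⟩ := h.exists_link_avoiding hJc hij hF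
  have hpq : p < q := not_le.1 fun hqp =>
    hWF _ (List.mem_of_head? hhead) (Or.inl (Or.inr ⟨q, hqp, rfl⟩))
  have hMr : M < r := not_le.1 fun hrM =>
    hWF _ (List.mem_of_getLast? hlast) (Or.inr ⟨r, hrM, rfl⟩)
  obtain ⟨hL₁, hend₁⟩ := hL.append_raySegment hend (h.isOutRay i) (q - 1 - p)
  rw [show p + (q - 1 - p) = q - 1 by omega] at hend₁
  refine ⟨raySegment (R i) (p + 1) (q - 1 - p), W, r, hL₁.append hW.1 ?_ ?_, ?_, hW⟩
  · simp only [hend₁.1, hhead, Option.mem_some_iff]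
    rintro _ rfl _ rfl
    simpa [show q - 1 + 1 = q by omega] using (h.isOutRay i).2 (q - 1)
  · intro u hu hu'
    rcases List.mem_append.1 hu with hu | hu
    · exact hWF u hu' (Or.inl (Or.inl hu))
    · obtain ⟨m, hm, rfl⟩ := mem_raySegment.1 hu
      have := hWi _ hu'
      omega
  · refine EndsOnRay.append ⟨hlast, fun m hm => (hWj m hm).le⟩ fun m hm => ?_
    rcases List.mem_append.1 hm with hm | hm
    · exact ((hM hm).trans_lt hMr).le
    · obtain ⟨m', -, he⟩ := mem_raySegment.1 hm
      exact absurd he (h.disjoint i j hij _ m)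

lemma exists_isOutRay_links (h : RayLadder D R P Q) {J : Set ℕ} (hJc : Jᶜ.Infinite)
    {a : ℕ → ℕ} (ha : ∀ n, a n ≠ a (n + 1)) :
    ∃ (S : ℕ → V) (W : ℕ → List V) (o : ℕ → ℕ), IsOutRay D S ∧ StrictMono o ∧
      (∀ n, IsSubpathOf S (W n) ∧ S (o n) ∈ Set.range (R (a n)) ∧
        IsLink D R J (a n) (a (n + 1)) (W n)) ∧
      Pairwise fun m n => ListsDisjoint (W m) (W n) := by
  have h₀ : IsDipath D [R (a 0) 0] ∧ EndsOnRay [R (a 0) 0] (R (a 0)) 0 :=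
    ⟨⟨by simp, by simp, List.isChain_singleton _⟩, rfl, fun m hm => by
      simpa using (h.isOutRay (a 0)).1 (List.mem_singleton.1 hm)⟩
  obtain ⟨f, hf⟩ := exists_seq_of_forall_exists (x₀ := ([R (a 0) 0], 0))
    (p := fun n x => IsDipath D x.1 ∧ EndsOnRay x.1 (R (a n)) x.2)
    (r := fun n x y => ∃ X W, y.1 = x.1 ++ X ++ W ∧ IsLink D R J (a n) (a (n + 1)) W) h₀
    fun n x hx => by
      obtain ⟨X, W, r, hXW, hend, hW⟩ := h.exists_extension hJc (ha n) hx.1 hx.2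
      exact ⟨(x.1 ++ X ++ W, r), ⟨hXW, hend⟩, X, W, rfl, hW⟩
  choose X W hXW hW using fun n => (hf n).2
  obtain ⟨S, o, hS, ho, hWseg, hnext⟩ :=
    exists_isOutRay_of_append (fun n => (hf n).1.1) (fun n => (hW n).1.1) hXW
  refine ⟨S, W, o, hS, ho, fun n => ⟨⟨o n, (hWseg n).symm⟩, ?_, hW n⟩, ?_⟩
  · obtain ⟨v, hv, hhead⟩ := (hW n).2.1
    have hSo := head?_raySegment (S := S) (s := o n) (List.length_pos_iff.2 (hW n).1.1)
    rw [hWseg n, hhead, Option.some_inj] at hSo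
    exact hSo ▸ hv
  · intro m n hmn
    rw [← hWseg m, ← hWseg n]
    rcases lt_or_gt_of_ne hmn with hlt | hlt
    · exact listsDisjoint_raySegment hS.1 ((hnext m).trans (ho.monotone hlt))
    · exact (listsDisjoint_raySegment hS.1 ((hnext n).trans (ho.monotone hlt))).symm

end RayLadder

lemma exists_seq_forall_pairs_nat :
    ∃ a : ℕ → ℕ, (∀ n, a n ≠ a (n + 1)) ∧
      ∀ i j, i ≠ j → {n | a n = i ∧ a (n + 1) = j}.Infinite := by
  -- `a` runs through blocks `x m, y m, y m + x (m + 1) + 1`, where `(x m, y m)` takes every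
  -- value `(i, j)` with `i ≠ j` infinitely often; the third entry differs from both neighbours.
  let e n := Nat.unpair (Nat.unpair n).2
  let x n := (e n).1
  let y n := if (e n).2 = (e n).1 then (e n).1 + 1 else (e n).2
  let a n := if n % 3 = 0 then x (n / 3) else if n % 3 = 1 then y (n / 3)
    else y (n / 3) + x (n / 3 + 1) + 1
  have ha₀ (m : ℕ) : a (3 * m) = x m := by simp [a]
  have ha₁ (m : ℕ) : a (3 * m + 1) = y m := by simp [a, Nat.add_mod, Nat.add_div]
  have ha₂ (m : ℕ) : a (3 * m + 2) = y m + x (m + 1) + 1 := by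
    simp [a, Nat.add_mod, Nat.add_div]
  have hxy (m : ℕ) : x m ≠ y m := by
    simp only [x, y]
    split_ifs <;> omega
  refine ⟨a, fun n => ?_, fun i j hij => ?_⟩
  · obtain ⟨m, t, ht, rfl⟩ : ∃ m t, t < 3 ∧ n = 3 * m + t :=
      ⟨n / 3, n % 3, Nat.mod_lt _ (by norm_num), (Nat.div_add_mod n 3).symm⟩
    interval_cases t
    · simpa [ha₀, ha₁] using hxy m
    · rw [ha₁, ha₂]
      omega
    · rw [ha₂, show 3 * m + 2 + 1 = 3 * (m + 1) by ring, ha₀]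
      omega
  · refine Set.infinite_of_forall_exists_gt fun N =>
      ⟨3 * Nat.pair (N + 1) (Nat.pair i j), ?_, ?_⟩
    · have he : e (Nat.pair (N + 1) (Nat.pair i j)) = (i, j) := by simp [e]
      simp [ha₀, ha₁, x, y, he, hij.symm]
    · have := Nat.left_le_pair (N + 1) (Nat.pair i j)
      omega

lemma exists_seq_forall_pairs {I : Set ℕ} (hI : I.Infinite) :
    ∃ a : ℕ → ℕ, (∀ n, a n ≠ a (n + 1)) ∧
      ∀ i ∈ I, ∀ j ∈ I, i ≠ j → {n | a n = i ∧ a (n + 1) = j}.Infinite := by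
  obtain ⟨b, hb, hpairs⟩ := exists_seq_forall_pairs_nat
  have hz : Function.Injective (Nat.nth (· ∈ I)) := Nat.nth_injective hI
  refine ⟨Nat.nth (· ∈ I) ∘ b, fun n => hz.ne (hb n), ?_⟩
  have hrange : Set.range (Nat.nth (· ∈ I)) = I := Nat.range_nth_of_infinite hI
  rintro _ hi _ hj hij
  obtain ⟨i, rfl⟩ := hrange ▸ hi
  obtain ⟨j, rfl⟩ := hrange ▸ hj
  simpa [hz.eq_iff] using hpairs i j (hz.ne_iff.1 hij)

theorem stmt16_general (D : Digraph V) (R : ℕ → ℕ → V)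
    (hray : ∀ i, IsOutRay D (R i))
    (hdisj : ∀ i j, i ≠ j → ∀ n m, R i n ≠ R j m)
    (P Q : ℕ → ℕ → List V)
    (hP : ∀ i j, i < j → IsDipath D (P i j) ∧ StartsIn (P i j) (Set.range (R i)) ∧
      EndsIn (P i j) (Set.range (R j)) ∧ InternallyAvoids (P i j) (RaysUnion R))
    (hPdisj : ∀ i j k, i < j → i < k → j ≠ k → ListsDisjoint (P i j) (P i k))
    (hQ : ∀ i j, j < i → IsDipath D (Q i j) ∧ StartsIn (Q i j) (Set.range (R i)) ∧
      EndsIn (Q i j) (Set.range (R j)) ∧ InternallyAvoids (Q i j) (RaysUnion R))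
    (hQdisj : ∀ i j k, k < i → k < j → i ≠ j → ListsDisjoint (Q i k) (Q j k))
    (horder : ∀ i j k, i < k → j < k → ∃ a b : ℕ,
      (P i k).getLast? = some (R k a) ∧ (Q k j).head? = some (R k b) ∧ a < b)
    (I₄ : Set ℕ) (hI₄ : I₄.Infinite) (hI₄c : I₄ᶜ.Infinite) :
    ∃ S : ℕ → V, IsOutRay D S ∧
      (∀ i ∈ I₄, {n : ℕ | S n ∈ Set.range (R i)}.Infinite) ∧
      ∀ i ∈ I₄, ∀ j ∈ I₄, i ≠ j →
        ∃ F : ℕ → List V,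
          (∀ n, IsDipath D (F n) ∧ IsSubpathOf S (F n) ∧
            StartsIn (F n) (Set.range (R i)) ∧ EndsIn (F n) (Set.range (R j)) ∧
            InternallyAvoids (F n) (⋃ k ∈ I₄, Set.range (R k))) ∧
          ∀ m n, m ≠ n → ListsDisjoint (F m) (F n) := by
  obtain ⟨a, hane, hpairs⟩ := exists_seq_forall_pairs hI₄
  obtain ⟨S, W, o, hS, ho, hW, hWdisj⟩ :=
    RayLadder.exists_isOutRay_links ⟨hray, hdisj, hP, hPdisj, hQ, hQdisj, horder⟩ hI₄c hane
  refine ⟨S, hS, fun i hi => ?_, fun i hi j hj hij => ?_⟩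
  · obtain ⟨j, hj, hji⟩ := (hI₄.sdiff (Set.finite_singleton i)).nonempty
    refine ((hpairs i hi j hj (Ne.symm hji)).image ho.injective.injOn).mono ?_
    rintro _ ⟨n, ⟨hn, -⟩, rfl⟩
    exact hn ▸ (hW n).2.1
  · have hlink (n : ℕ) (hn : a n = i ∧ a (n + 1) = j) : IsDipath D (W n) ∧
        IsSubpathOf S (W n) ∧ StartsIn (W n) (Set.range (R i)) ∧
        EndsIn (W n) (Set.range (R j)) ∧ InternallyAvoids (W n) (⋃ k ∈ I₄, Set.range (R k)) := by
      obtain ⟨hsub, -, hdip, hstart, hend, havoid⟩ := hW n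
      obtain ⟨rfl, rfl⟩ := hn
      exact ⟨hdip, hsub, hstart, hend, havoid⟩
    let g := (hpairs i hi j hj hij).natEmbedding
    exact ⟨fun t => W (g t), fun t => hlink _ (g t).2,
      hWdisj.comp_of_injective fun t t' htt' => g.injective (Subtype.ext htt')⟩

/-- Claim 6.1: given disjoint equivalent out-rays `(R i)_{i ∈ ℕ}` together with forward
path families `P i j` (`i < j`) and backward path families `Q i j` (`i > j`) as in the
proof of the main theorem, for every infinite `I₄ ⊆ ℕ` with infinite complement there is
an out-ray `S` meeting every `R i` (`i ∈ I₄`) infinitely often such that any two rays of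
`I₄` are joined, in both directions, by infinitely many disjoint paths lying on `S` and
internally disjoint from `⋃_{i ∈ I₄} R i`. -/
theorem stmt16 (D : Digraph V) (R : ℕ → ℕ → V)
    (hray : ∀ i, IsOutRay D (R i))
    (hdisj : ∀ i j, i ≠ j → ∀ n m, R i n ≠ R j m)
    (hequiv : ∀ i j, i ≠ j → EquivRays D (R i) (R j))
    (P Q : ℕ → ℕ → List V)
    (hP : ∀ i j, i < j → IsDipath D (P i j) ∧ StartsIn (P i j) (Set.range (R i)) ∧
      EndsIn (P i j) (Set.range (R j)) ∧ InternallyAvoids (P i j) (RaysUnion R))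
    (hPdisj : ∀ i j k, i < j → i < k → j ≠ k → ListsDisjoint (P i j) (P i k))
    (hQ : ∀ i j, j < i → IsDipath D (Q i j) ∧ StartsIn (Q i j) (Set.range (R i)) ∧
      EndsIn (Q i j) (Set.range (R j)) ∧ InternallyAvoids (Q i j) (RaysUnion R))
    (hQdisj : ∀ i j k, k < i → k < j → i ≠ j → ListsDisjoint (Q i k) (Q j k))
    (horder : ∀ i j k, i < k → j < k → ∃ a b : ℕ,
      (P i k).getLast? = some (R k a) ∧ (Q k j).head? = some (R k b) ∧ a < b)
    (I₄ : Set ℕ) (hI₄ : I₄.Infinite) (hI₄c : I₄ᶜ.Infinite) :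
    ∃ S : ℕ → V, IsOutRay D S ∧
      (∀ i ∈ I₄, {n : ℕ | S n ∈ Set.range (R i)}.Infinite) ∧
      ∀ i ∈ I₄, ∀ j ∈ I₄, i ≠ j →
        ∃ F : ℕ → List V,
          (∀ n, IsDipath D (F n) ∧ IsSubpathOf S (F n) ∧
            StartsIn (F n) (Set.range (R i)) ∧ EndsIn (F n) (Set.range (R j)) ∧
            InternallyAvoids (F n) (⋃ k ∈ I₄, Set.range (R k))) ∧
          ∀ m n, m ≠ n → ListsDisjoint (F m) (F n) :=
  stmt16_general D R hray hdisj P Q hP hPdisj hQ hQdisj horder I₄ hI₄ hI₄c
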